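/- For the deterministic inventory policy, the average ordering measures are not tight: for any ε < 1/2 and any compact set Γ ⊂ {(y,z) ∈ ℝ²: y ≤ z}, there exists n such that m_{1,t_{n+1,1}}(Γᶜ) > ε. Specifically, m_{1,t_{n+1,1}}({(2^((n-1)/2), 2^((n-1)/2))}) = 2^(n-1)/(2^n + (2^(n/2)-1)/(2^(1/2)-1) - 1), which converges to 1/2 as n → ∞. -/

import Mathlib

open Filter Classical

/-- Start time `t_{i,1}` of cycle `i` (`i ≥ 1`) of the deterministic policy. -/
noncomputable def cycleStart (i : ℕ) : ℝ :=
  2 ^ (i - 1) + ((2 : ℝ) ^ (((i : ℝ) - 1) / 2) - 1) / (Real.sqrt 2 - 1) - 1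

/-- Time of the `j`-th order (`1 ≤ j ≤ 2^i + 1`) of cycle `i ≥ 1`. -/
noncomputable def ordTime (i j : ℕ) : ℝ :=
  if j ≤ 2 ^ (i - 1) then cycleStart i + (j - 1 : ℕ) else cycleStart i + 2 ^ (i - 1)

/-- Pre-order inventory level of the `j`-th order of cycle `i`: the Phase-1
orders and the large order are placed when the inventory hits 0; the size-0
orders are placed immediately after the large order, at level `2^((i-1)/2)`. -/
noncomputable def ordPre (i j : ℕ) : ℝ :=
  if j ≤ 2 ^ (i - 1) + 1 then 0 else (2 : ℝ) ^ (((i : ℝ) - 1) / 2)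

/-- Size of the `j`-th order of cycle `i`. -/
noncomputable def ordSize (i j : ℕ) : ℝ :=
  if j ≤ 2 ^ (i - 1) then 1
  else if j = 2 ^ (i - 1) + 1 then (2 : ℝ) ^ (((i : ℝ) - 1) / 2) else 0

/-- Post-order inventory level of the `j`-th order of cycle `i`. -/
noncomputable def ordPost (i j : ℕ) : ℝ := ordPre i j + ordSize i j

/-- The average ordering measure over the horizon `[0, t]`:
`m_{1,t}(Γ) = (1/t) · #{orders placed by time t with (pre, post) levels in Γ}`. -/

noncomputable def m1 (t : ℝ) (Γ : Set (ℝ × ℝ)) : ℝ :=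
  (1 / t) * ∑' i : ℕ, ∑ j ∈ Finset.Icc 1 (2 ^ (i + 1) + 1),
    if ordTime (i + 1) j ≤ t ∧ (ordPre (i + 1) j, ordPost (i + 1) j) ∈ Γ then (1 : ℝ)
    else 0

/-!
In cycle `m + 1` the policy places `2 ^ m` orders of size `0` at the level `√2 ^ m`, all of them
before the start `t_{m+2,1}` of the next cycle, and no order of another cycle is placed at that
level. So `m_{1,t_{m+2,1}}` gives the diagonal point `(√2 ^ m, √2 ^ m)` the mass
`2 ^ m / t_{m+2,1}`, which tends to `1/2` because `t_{m+2,1} = 2 ^ (m + 1) + O(√2 ^ m)`. These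
points escape to infinity, so eventually they lie outside any compact `Γ`.
-/

open Finset Topology

lemma cycleStart_succ (n : ℕ) :
    cycleStart (n + 1) = 2 ^ n + (√2 ^ n - 1) / (√2 - 1) - 1 := by
  rw [cycleStart, Nat.add_sub_cancel, Nat.cast_succ, add_sub_cancel_right,
    Real.rpow_div_two_eq_sqrt _ zero_le_two, Real.rpow_natCast]

lemma cycleStart_succ_eq_rpow (n : ℕ) :
    cycleStart (n + 1) =
      2 ^ n + ((2 : ℝ) ^ ((n : ℝ) / 2) - 1) / ((2 : ℝ) ^ ((1 : ℝ) / 2) - 1) - 1 := by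
  rw [cycleStart_succ, Real.rpow_div_two_eq_sqrt _ zero_le_two,
    Real.rpow_div_two_eq_sqrt _ zero_le_two, Real.rpow_natCast, Real.rpow_one]

lemma cycleStart_add_two (n : ℕ) :
    cycleStart (n + 2) = cycleStart (n + 1) + 2 ^ n + √2 ^ n := by
  have h : √2 - 1 ≠ 0 := (sub_pos.2 Real.one_lt_sqrt_two).ne'
  rw [show n + 2 = n + 1 + 1 from rfl, cycleStart_succ, cycleStart_succ]
  field_simp
  ring

lemma natCast_le_cycleStart_succ (n : ℕ) : (n : ℝ) ≤ cycleStart (n + 1) := by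
  have hn : (n : ℝ) + 1 ≤ 2 ^ n := by exact_mod_cast Nat.lt_two_pow_self
  have hgeom : 0 ≤ (√2 ^ n - 1) / (√2 - 1) :=
    div_nonneg (sub_nonneg.2 (one_le_pow₀ (by simp))) (sub_nonneg.2 (by simp))
  rw [cycleStart_succ]
  linarith

lemma cycleStart_le_ordTime (i j : ℕ) : cycleStart i ≤ ordTime i j := by
  unfold ordTime
  split_ifs <;> exact le_add_of_nonneg_right (by positivity)

lemma ordTime_succ_le_cycleStart {i j : ℕ} (hj : 2 ^ i < j) :
    ordTime (i + 1) j ≤ cycleStart (i + 2) := by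
  rw [ordTime, Nat.add_sub_cancel, if_neg hj.not_ge, cycleStart_add_two]
  exact le_add_of_nonneg_right (by positivity)

noncomputable def cycleLevel (i : ℕ) : ℝ := (2 : ℝ) ^ (((i : ℝ) - 1) / 2)

lemma cycleLevel_succ (i : ℕ) : cycleLevel (i + 1) = √2 ^ i := by
  rw [cycleLevel, Nat.cast_succ, add_sub_cancel_right,
    Real.rpow_div_two_eq_sqrt _ zero_le_two, Real.rpow_natCast]

lemma cycleLevel_succ_pos (i : ℕ) : 0 < cycleLevel (i + 1) := by
  rw [cycleLevel_succ]
  positivity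

lemma cycleLevel_succ_injective : Function.Injective fun i ↦ cycleLevel (i + 1) := by
  simpa only [cycleLevel_succ] using
    pow_right_injective₀ (by positivity) Real.one_lt_sqrt_two.ne'

lemma tendsto_cycleLevel_atTop : Tendsto cycleLevel atTop atTop := by
  rw [← tendsto_add_atTop_iff_nat 1]
  simpa only [cycleLevel_succ] using tendsto_pow_atTop_atTop_of_one_lt Real.one_lt_sqrt_two

lemma ordLevels_eq_cycleLevel_iff (i m j : ℕ) :
    (ordPre (i + 1) j, ordPost (i + 1) j) = (cycleLevel (m + 1), cycleLevel (m + 1)) ↔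
      i = m ∧ 2 ^ m + 1 < j := by
  have hpre : ordPre (i + 1) j = if j ≤ 2 ^ i + 1 then 0 else cycleLevel (i + 1) := by
    rw [ordPre, Nat.add_sub_cancel]
    rfl
  constructor
  · intro h
    have hfst := congrArg Prod.fst h
    simp only [hpre] at hfst
    split_ifs at hfst with hj
    · exact absurd hfst.symm (cycleLevel_succ_pos m).ne'
    · obtain rfl := cycleLevel_succ_injective hfst
      exact ⟨rfl, by omega⟩
  · rintro ⟨rfl, hj⟩
    have hsize : ordSize (i + 1) j = 0 := by
      rw [ordSize, Nat.add_sub_cancel, if_neg (by omega), if_neg (by omega)]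
    rw [ordPost, hsize, add_zero, hpre, if_neg (by omega)]

noncomputable def cycleCount (t : ℝ) (Γ : Set (ℝ × ℝ)) (i : ℕ) : ℝ :=
  ∑ j ∈ Icc 1 (2 ^ (i + 1) + 1),
    if ordTime (i + 1) j ≤ t ∧ (ordPre (i + 1) j, ordPost (i + 1) j) ∈ Γ then 1 else 0

lemma m1_eq_tsum_cycleCount (t : ℝ) (Γ : Set (ℝ × ℝ)) :
    m1 t Γ = 1 / t * ∑' i, cycleCount t Γ i :=
  rfl

lemma cycleCount_eq_zero {t : ℝ} {i : ℕ} (ht : t < cycleStart (i + 1)) (Γ : Set (ℝ × ℝ)) :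
    cycleCount t Γ i = 0 :=
  sum_eq_zero fun j _ ↦ if_neg fun h ↦ (ht.trans_le (cycleStart_le_ordTime _ j)).not_ge h.1

lemma summable_cycleCount (t : ℝ) (Γ : Set (ℝ × ℝ)) : Summable (cycleCount t Γ) := by
  refine summable_of_ne_finset_zero (s := range (⌈t⌉₊ + 1))
    fun i hi ↦ cycleCount_eq_zero ?_ Γ
  have hi : (⌈t⌉₊ : ℝ) < i := by
    exact_mod_cast Nat.lt_of_succ_le (not_lt.1 (mt mem_range.2 hi))
  exact (Nat.le_ceil t).trans_lt (hi.trans_le (natCast_le_cycleStart_succ i))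

lemma m1_mono {t : ℝ} (ht : 0 ≤ t) {S T : Set (ℝ × ℝ)} (hST : S ⊆ T) :
    m1 t S ≤ m1 t T := by
  rw [m1_eq_tsum_cycleCount, m1_eq_tsum_cycleCount]
  refine mul_le_mul_of_nonneg_left ?_ (by positivity)
  refine Summable.tsum_le_tsum (fun i ↦ sum_le_sum fun j _ ↦ ?_)
    (summable_cycleCount t S) (summable_cycleCount t T)
  split_ifs with hS hT
  · exact le_rfl
  · exact absurd ⟨hS.1, hST hS.2⟩ hT
  · exact zero_le_one
  · exact le_rfl

lemma filter_Icc_one_lt_eq_Ioc (a b : ℕ) : {j ∈ Icc 1 b | a < j} = Ioc a b := by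
  ext j
  simp only [mem_filter, mem_Icc, mem_Ioc]
  omega

lemma cycleCount_cycleStart_singleton_cycleLevel (m i : ℕ) :
    cycleCount (cycleStart (m + 2)) {(cycleLevel (m + 1), cycleLevel (m + 1))} i =
      if i = m then 2 ^ m else 0 := by
  have hcond : ∀ j, (ordTime (i + 1) j ≤ cycleStart (m + 2) ∧ (ordPre (i + 1) j,
      ordPost (i + 1) j) ∈ ({(cycleLevel (m + 1), cycleLevel (m + 1))} : Set (ℝ × ℝ))) ↔
        i = m ∧ 2 ^ m + 1 < j := by
    intro j
    rw [Set.mem_singleton_iff, ordLevels_eq_cycleLevel_iff, and_iff_right_iff_imp]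
    rintro ⟨rfl, hj⟩
    exact ordTime_succ_le_cycleStart (by omega)
  simp only [cycleCount, hcond]
  split_ifs with hi
  · subst hi
    simp only [true_and]
    rw [sum_boole, filter_Icc_one_lt_eq_Ioc, Nat.card_Ioc,
      show 2 ^ (i + 1) + 1 - (2 ^ i + 1) = 2 ^ i by rw [pow_succ]; omega]
    norm_cast
  · simp only [hi, false_and, if_false, sum_const_zero]

lemma m1_cycleStart_succ_singleton_cycleLevel {n : ℕ} (hn : 1 ≤ n) :
    m1 (cycleStart (n + 1)) {(cycleLevel n, cycleLevel n)} = 2 ^ (n - 1) / cycleStart (n + 1) := by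
  obtain ⟨m, rfl⟩ := Nat.exists_eq_add_of_le' hn
  rw [m1_eq_tsum_cycleCount, funext (cycleCount_cycleStart_singleton_cycleLevel m), tsum_ite_eq,
    one_div_mul_eq_div, Nat.add_sub_cancel]

lemma tendsto_cycleStart_succ_div_two_pow :
    Tendsto (fun n : ℕ ↦ cycleStart (n + 1) / 2 ^ n) atTop (𝓝 1) := by
  have hs : √2 - 1 ≠ 0 := (sub_pos.2 Real.one_lt_sqrt_two).ne'
  have hform : ∀ n : ℕ, cycleStart (n + 1) / 2 ^ n =
      1 + ((√2 / 2) ^ n - (1 / 2) ^ n) / (√2 - 1) - (1 / 2) ^ n := by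
    intro n
    rw [cycleStart_succ, div_pow, div_pow, one_pow]
    field_simp
  have hhalf : Tendsto (fun n : ℕ ↦ (1 / 2 : ℝ) ^ n) atTop (𝓝 0) :=
    tendsto_pow_atTop_nhds_zero_of_lt_one (by norm_num) (by norm_num)
  have hsqrt : Tendsto (fun n : ℕ ↦ (√2 / 2) ^ n) atTop (𝓝 0) :=
    tendsto_pow_atTop_nhds_zero_of_lt_one (by positivity) <| (div_lt_one two_pos).2 <|
      (Real.sqrt_lt' two_pos).2 (by norm_num)
  simp_rw [hform]
  simpa using (tendsto_const_nhds.add ((hsqrt.sub hhalf).div_const (√2 - 1))).sub hhalf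

lemma tendsto_two_pow_pred_div_cycleStart_succ :
    Tendsto (fun n : ℕ ↦ 2 ^ (n - 1) / cycleStart (n + 1)) atTop (𝓝 (1 / 2)) := by
  rw [← tendsto_add_atTop_iff_nat 1]
  have h : Tendsto (fun n : ℕ ↦ 1 / 2 * (cycleStart (n + 1 + 1) / 2 ^ (n + 1))⁻¹) atTop
      (𝓝 (1 / 2 * 1⁻¹)) :=
    ((tendsto_add_atTop_iff_nat 1).2 tendsto_cycleStart_succ_div_two_pow).inv₀ one_ne_zero
      |>.const_mul _
  rw [inv_one, mul_one] at h
  refine h.congr fun n ↦ ?_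
  rw [Nat.add_sub_cancel, pow_succ]
  field_simp

lemma eventually_diag_notMem {α : Type*} {l : Filter α} {f : α → ℝ} (hf : Tendsto f l atTop)
    {Γ : Set (ℝ × ℝ)} (hΓ : Bornology.IsBounded Γ) : ∀ᶠ a in l, (f a, f a) ∉ Γ := by
  have h : Tendsto (fun a ↦ (f a, f a)) l (Bornology.cobounded (ℝ × ℝ)) := by
    rw [← tendsto_norm_atTop_iff_cobounded]
    simpa [Prod.norm_def, Function.comp_def] using tendsto_abs_atTop_atTop.comp hf
  exact h.eventually (Bornology.isBounded_def.1 hΓ)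

/-- Non-tightness of the average ordering measures of the deterministic cyclic
policy.  For every `n ≥ 1`, the mass placed by `m_{1, t_{n+1,1}}` on the single
diagonal point `(2^((n-1)/2), 2^((n-1)/2))` equals
`2^(n-1) / (2^n + (2^(n/2)-1)/(2^(1/2)-1) - 1)`, which converges to `1/2` as
`n → ∞`; consequently, for any `ε < 1/2` and any compact
`Γ ⊆ {(y,z) : y ≤ z}`, there is some `n` with `m_{1,t_{n+1,1}}(Γᶜ) > ε`. -/
theorem deterministic_ordering_measures_not_tight :
    (∀ n : ℕ, 1 ≤ n →
      m1 (cycleStart (n + 1))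
          {((2 : ℝ) ^ (((n : ℝ) - 1) / 2), (2 : ℝ) ^ (((n : ℝ) - 1) / 2))}
        = 2 ^ (n - 1)
            / (2 ^ n + ((2 : ℝ) ^ ((n : ℝ) / 2) - 1) / ((2 : ℝ) ^ ((1:ℝ) / 2) - 1) - 1))
    ∧ Filter.Tendsto
        (fun n : ℕ =>
          (2 : ℝ) ^ (n - 1)
            / (2 ^ n + ((2 : ℝ) ^ ((n : ℝ) / 2) - 1) / ((2 : ℝ) ^ ((1:ℝ) / 2) - 1) - 1))
        Filter.atTop (nhds (1 / 2))
    ∧ ∀ ε : ℝ, ε < 1 / 2 → ∀ Γ : Set (ℝ × ℝ), IsCompact Γ →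
        Γ ⊆ {p : ℝ × ℝ | p.1 ≤ p.2} →
        ∃ n : ℕ, 1 ≤ n ∧ ε < m1 (cycleStart (n + 1)) Γᶜ := by
  simp only [← cycleStart_succ_eq_rpow]
  refine ⟨fun _ ↦ m1_cycleStart_succ_singleton_cycleLevel,
    tendsto_two_pow_pred_div_cycleStart_succ, fun ε hε Γ hΓ _ ↦ ?_⟩
  obtain ⟨n, hn, hε, hΓn⟩ := ((eventually_ge_atTop 1).and
    ((tendsto_two_pow_pred_div_cycleStart_succ.eventually (eventually_gt_nhds hε)).and
      (eventually_diag_notMem tendsto_cycleLevel_atTop hΓ.isBounded))).exists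
  refine ⟨n, hn, hε.trans_le ?_⟩
  rw [← m1_cycleStart_succ_singleton_cycleLevel hn]
  exact m1_mono (natCast_le_cycleStart_succ n |>.trans' n.cast_nonneg)
    (Set.singleton_subset_iff.2 hΓn)
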